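/- Let s0,…,s3 and π act on the parameter vector (α0,α1,α2,α3) ∈ ℂ⁴ by: s0: (−α0, α1, α2+α0, α3); s1: (α0, −α1, α2+α1, α3); s2: (α0+α2, α1+α2, −α2, α3+2α2); s3: (α0, α1, α2+α3, −α3); π: (α1, α0, α2, α3). Define T1 := π s0 s2 s3 s2 s0, T2 := π s0 s1 s2 s3 s2, T3 := s2 T2 s2 (composition of these parameter actions). Then for every parameter vector satisfying α0+α1+2α2+α3 = 1: T1(α) = α + (−1,1,0,0), T2(α) = α + (1,1,−1,0), and T3(α) = α + (0,0,1,−2). -/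
import Mathlib


/- STATEMENT 12: the translation operators T1 = π s0 s2 s3 s2 s0,
T2 = π s0 s1 s2 s3 s2, T3 = s2 T2 s2 built from the parameter parts of the
Bäcklund transformations of the A5^(2) system act as the indicated translations
on the parameter hyperplane α0+α1+2α2+α3 = 1.
A word `g1 g2 … gk` acts by applying `g1` first, then `g2`, etc. -/

/-- Parameter space of the A5^(2) system. -/
abbrev P4 := ℂ × ℂ × ℂ × ℂ

def s0A5 : P4 → P4 | (a0, a1, a2, a3) => (-a0, a1, a2 + a0, a3)
def s1A5 : P4 → P4 | (a0, a1, a2, a3) => (a0, -a1, a2 + a1, a3)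
def s2A5 : P4 → P4 | (a0, a1, a2, a3) => (a0 + a2, a1 + a2, -a2, a3 + 2*a2)
def s3A5 : P4 → P4 | (a0, a1, a2, a3) => (a0, a1, a2 + a3, -a3)
def piA5 : P4 → P4 | (a0, a1, a2, a3) => (a1, a0, a2, a3)

/-- `T1 := π s0 s2 s3 s2 s0` (apply `π` first, then `s0`, …, then `s0`). -/
def T1A5 : P4 → P4 := s0A5 ∘ s2A5 ∘ s3A5 ∘ s2A5 ∘ s0A5 ∘ piA5

/-- `T2 := π s0 s1 s2 s3 s2` (apply `π` first, …, then `s2`). -/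
def T2A5 : P4 → P4 := s2A5 ∘ s3A5 ∘ s2A5 ∘ s1A5 ∘ s0A5 ∘ piA5

/-- `T3 := s2 T2 s2`. -/
def T3A5 : P4 → P4 := s2A5 ∘ T2A5 ∘ s2A5

theorem translations_A5 (a0 a1 a2 a3 : ℂ)
    (hrel : a0 + a1 + 2*a2 + a3 = 1) :
    T1A5 (a0, a1, a2, a3) = (a0 - 1, a1 + 1, a2, a3) ∧
    T2A5 (a0, a1, a2, a3) = (a0 + 1, a1 + 1, a2 - 1, a3) ∧
    T3A5 (a0, a1, a2, a3) = (a0, a1, a2 + 1, a3 - 2) := by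
  obtain rfl : a3 = 1 - a0 - a1 - 2*a2 := by linear_combination hrel
  refine ⟨?_, ?_, ?_⟩ <;>
    simp only [T1A5, T2A5, T3A5, s0A5, s1A5, s2A5, s3A5, piA5, Function.comp] <;>
    refine Prod.ext (by ring) (Prod.ext (by ring) (Prod.ext (by ring) (by ring)))
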